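/- arXiv:1904.03671 — 6 statements merged into one kernel-verified Lean document; each statement's English description precedes it below -/
import Mathlib

section
/- Let S be a logical state of a disjunctive sequent calculus (L(P),⊢) and let X be a subset of S. Then [X]_S = ⋂{W : W is a logical state and X ⊆ W ⊆ S} is itself a logical state. -/
/- ## Syntax of disjunctive propositional logic -/

/-- Raw formulae over a set `P` of atomic formulae: atoms, the constants
`T` and `F`, binary conjunction, and disjunction of an arbitrary family
of formulae. -/
inductive Fm (P : Type) : Type 1 where
  | atom : P → Fm P
  | tt : Fm P
  | ff : Fm P
  | conj : Fm P → Fm P → Fm P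
  | disj : {ι : Type} → (ι → Fm P) → Fm P

namespace Fm

/-- The valid sequents of the disjunctive sequent calculus generated from the
disjunctive basis `(P, A)`, where `A` is the set of atomic disjointness
assumptions `p₁,…,pₙ ⊢ F` (each given by a finite nonempty set of atoms). -/
inductive Seq {P : Type} (A : Set (Set P)) : Set (Fm P) → Fm P → Prop where
  | ax {s : Set P} : s ∈ A → s.Finite → s.Nonempty → Seq A (Fm.atom '' s) Fm.ff
  | id (φ : Fm P) : Seq A {φ} φ
  | lwk {Γ : Set (Fm P)} {ψ : Fm P} (φ : Fm P) : Seq A Γ ψ → Seq A (insert φ Γ) ψ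
  | cut {Γ Δ : Set (Fm P)} {φ ψ : Fm P} :
      Seq A Γ φ → Seq A (insert φ Δ) ψ → Seq A (Γ ∪ Δ) ψ
  | lf (φ : Fm P) : Seq A {Fm.ff} φ
  | rt : Seq A ∅ Fm.tt
  | landl {Γ : Set (Fm P)} {φ ψ θ : Fm P} :
      Seq A (insert φ (insert ψ Γ)) θ → Seq A (insert (Fm.conj φ ψ) Γ) θ
  | randr {Γ Δ : Set (Fm P)} {φ ψ : Fm P} :
      Seq A Γ φ → Seq A Δ ψ → Seq A (Γ ∪ Δ) (Fm.conj φ ψ)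
  | ldisj {Γ : Set (Fm P)} {θ : Fm P} {ι : Type} {f : ι → Fm P} :
      (∀ i, Seq A (insert (f i) Γ) θ) → (∀ i j, i ≠ j → Seq A {f i, f j} Fm.ff) →
      Seq A (insert (Fm.disj f) Γ) θ
  | rdisj {Γ : Set (Fm P)} {ι : Type} {f : ι → Fm P} (i₀ : ι) :
      Seq A Γ (f i₀) → (∀ i j, i ≠ j → Seq A {f i, f j} Fm.ff) →
      Seq A Γ (Fm.disj f)

/-- The wellformed formulae `L(P)` generated from the disjunctive basis
`(P, A)`: disjunctions are only formed over provably pairwise disjoint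
families. -/
inductive WF {P : Type} (A : Set (Set P)) : Fm P → Prop where
  | atom (p : P) : WF A (Fm.atom p)
  | tt : WF A Fm.tt
  | ff : WF A Fm.ff
  | conj {φ ψ : Fm P} : WF A φ → WF A ψ → WF A (Fm.conj φ ψ)
  | disj {ι : Type} {f : ι → Fm P} : (∀ i, WF A (f i)) →
      (∀ i j, i ≠ j → Seq A {f i, f j} Fm.ff) → WF A (Fm.disj f)

end Fm

/- ## Generic notions relative to a wellformedness predicate `W` (the set
`L(P)` of formulae) and an entailment relation `E` (the valid sequents). -/

section Defs

variable {P Q R : Type}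

/-- `φ` is a tautology: `T ⊢ φ` is valid. -/
def Taut (W : Fm P → Prop) (E : Set (Fm P) → Fm P → Prop) (φ : Fm P) : Prop :=
  W φ ∧ E {Fm.tt} φ

/-- `φ` is a contradiction: `φ ⊢ F` is valid. -/
def Contra (W : Fm P → Prop) (E : Set (Fm P) → Fm P → Prop) (φ : Fm P) : Prop :=
  W φ ∧ E {φ} Fm.ff

/-- `φ` is satisfiable: neither a tautology nor a contradiction. -/
def Satisfiable (W : Fm P → Prop) (E : Set (Fm P) → Fm P → Prop) (φ : Fm P) : Prop :=
  W φ ∧ ¬ Taut W E φ ∧ ¬ Contra W E φ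

/-- Built up from atomic formulae only by conjunctive connectives. -/
inductive ConjShape {P : Type} : Fm P → Prop where
  | atom (p : P) : ConjShape (Fm.atom p)
  | conj {φ ψ : Fm P} : ConjShape φ → ConjShape ψ → ConjShape (Fm.conj φ ψ)

/-- A conjunction: a satisfiable formula built up from atomic formulae only
by conjunctive connectives. -/
def IsConjForm (W : Fm P → Prop) (E : Set (Fm P) → Fm P → Prop) (φ : Fm P) : Prop :=
  ConjShape φ ∧ Satisfiable W E φ

/-- `X[⊢] = {φ ∈ L(P) : Γ ⊢ φ is valid for some finite Γ ⊆ X}`. -/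
def entClose (W : Fm P → Prop) (E : Set (Fm P) → Fm P → Prop) (X : Set (Fm P)) :
    Set (Fm P) :=
  {φ | W φ ∧ ∃ Γ : Set (Fm P), Γ ⊆ X ∧ Γ.Finite ∧ E Γ φ}

/-- A logical state: a nonempty proper subset `S` of `L(P)` such that
(S1) any flat formula `⋁̇ᵢ μᵢ` in `S` has some disjunct `μᵢ₀ ∈ S`, and
(S2) `S[⊢] ⊆ S`. -/
structure IsLogicalState (W : Fm P → Prop) (E : Set (Fm P) → Fm P → Prop)
    (S : Set (Fm P)) : Prop where
  nonempty : S.Nonempty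
  subset : S ⊆ {φ | W φ}
  proper : S ≠ {φ | W φ}
  s1 : ∀ (ι : Type) (f : ι → Fm P), (∀ i, IsConjForm W E (f i)) →
      (∀ i j, i ≠ j → E {f i, f j} Fm.ff) → Satisfiable W E (Fm.disj f) →
      Fm.disj f ∈ S → ∃ i, f i ∈ S
  s2 : entClose W E S ⊆ S

/-- `[X]_S`: the intersection of all logical states `T` with `X ⊆ T ⊆ S`. -/
def clIn (W : Fm P → Prop) (E : Set (Fm P) → Fm P → Prop) (X S : Set (Fm P)) :
    Set (Fm P) :=
  ⋂₀ {T | IsLogicalState W E T ∧ X ⊆ T ∧ T ⊆ S}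

/-- An irreducible conjunction. -/
def IsIrredConj (W : Fm P → Prop) (E : Set (Fm P) → Fm P → Prop) (μ : Fm P) : Prop :=
  IsConjForm W E μ ∧ ∀ (ι : Type) (f : ι → Fm P), (∀ i, W (f i)) →
    (∀ i j, i ≠ j → E {f i, f j} Fm.ff) → E {μ} (Fm.disj f) → ∃ i, E {μ} (f i)

/-- An expressive disjunctive sequent calculus: every satisfiable formula is
logically equivalent to an irreducible flat formula (from below disjunctwise). -/
def Expressive (W : Fm P → Prop) (E : Set (Fm P) → Fm P → Prop) : Prop :=
  ∀ ψ : Fm P, Satisfiable W E ψ → ∃ (ι : Type) (f : ι → Fm P),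
    (∀ i, IsIrredConj W E (f i)) ∧ (∀ i j, i ≠ j → E {f i, f j} Fm.ff) ∧
    Satisfiable W E (Fm.disj f) ∧ E {ψ} (Fm.disj f) ∧ ∀ i, E {f i} ψ

/-- `Θ[X] = {φ ∈ L(Q) : (μ,φ) ∈ Θ for some μ ∈ X ∩ IC(P)}`. -/
def ThetaImage (WP : Fm P → Prop) (EP : Set (Fm P) → Fm P → Prop)
    (Θ : Fm P → Fm Q → Prop) (X : Set (Fm P)) : Set (Fm Q) :=
  {φ | ∃ μ ∈ X, IsIrredConj WP EP μ ∧ Θ μ φ}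

/-- A consequence relation `Θ ⊆ IC(P) × L(Q)` satisfying (R1), (R2), (R3). -/
def IsConsRel (WP : Fm P → Prop) (EP : Set (Fm P) → Fm P → Prop)
    (WQ : Fm Q → Prop) (EQ : Set (Fm Q) → Fm Q → Prop)
    (Θ : Fm P → Fm Q → Prop) : Prop :=
  (∀ μ ψ, Θ μ ψ → IsIrredConj WP EP μ ∧ WQ ψ) ∧
  (∀ μ ν ψ, IsIrredConj WP EP μ → EP {μ} ν → Θ ν ψ → Θ μ ψ) ∧
  (∀ μ φ ψ, WQ ψ → Θ μ φ → EQ {φ} ψ → Θ μ ψ) ∧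
  (∀ μ ψ, Θ μ ψ → ∃ ν, IsIrredConj WQ EQ ν ∧ Θ μ ν ∧ EQ {ν} ψ)

/-- Composition of consequence relations. -/
def consRelComp (WQ : Fm Q → Prop) (EQ : Set (Fm Q) → Fm Q → Prop)
    (Θ : Fm P → Fm Q → Prop) (Θ' : Fm Q → Fm R → Prop) : Fm P → Fm R → Prop :=
  fun μ φ => ∃ ν, IsIrredConj WQ EQ ν ∧ Θ μ ν ∧ Θ' ν φ

/-- The identity consequence relation `(μ,φ) ∈ id_P ↔ φ ∈ {μ}[⊢_P]`. -/
def consRelId (W : Fm P → Prop) (E : Set (Fm P) → Fm P → Prop) : Fm P → Fm P → Prop :=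
  fun μ φ => IsIrredConj W E μ ∧ φ ∈ entClose W E {μ}

end Defs

/-- The poset of logical states of the calculus generated by the basis `(P,A)`,
ordered by set inclusion. -/
abbrev LSt (P : Type) (A : Set (Set P)) : Type 1 :=
  {S : Set (Fm P) // IsLogicalState (Fm.WF A) (Fm.Seq A) S}

/- ## Domain-theoretic notions -/

/-- A compact element of a poset (w.r.t. suprema of directed subsets). -/
def IsCompactElt {α : Type*} [PartialOrder α] (x : α) : Prop :=
  ∀ d : Set α, d.Nonempty → DirectedOn (· ≤ ·) d → ∀ s, IsLUB d s → x ≤ s →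
    ∃ y ∈ d, x ≤ y

/-- An algebraic domain: a pointed dcpo in which every element is the
supremum of the directed set of compact elements below it. -/
def IsAlgebraicDomain (α : Type*) [PartialOrder α] : Prop :=
  (∃ b : α, ∀ x, b ≤ x) ∧
  (∀ d : Set α, d.Nonempty → DirectedOn (· ≤ ·) d → ∃ s, IsLUB d s) ∧
  (∀ x : α, ({k : α | IsCompactElt k ∧ k ≤ x}).Nonempty ∧
    DirectedOn (· ≤ ·) {k : α | IsCompactElt k ∧ k ≤ x} ∧
    IsLUB {k : α | IsCompactElt k ∧ k ≤ x} x)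

/-- An algebraic L-domain: an algebraic domain in which every principal ideal
`↓x` is a complete lattice (every subset of `↓x` has a supremum in `↓x`). -/
def IsAlgebraicLDomain (α : Type*) [PartialOrder α] : Prop :=
  IsAlgebraicDomain α ∧
  ∀ x : α, ∀ T : Set α, T ⊆ Set.Iic x → ∃ s ∈ Set.Iic x,
    (∀ t ∈ T, t ≤ s) ∧ ∀ u ∈ Set.Iic x, (∀ t ∈ T, t ≤ u) → s ≤ u

/- ## The calculus associated with an algebraic L-domain -/

/-- The atomic formulae of the associated calculus: (upsets of) elements of
`K*(D)`, the compact non-bottom elements. -/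
abbrev LAtom (D : Type) [PartialOrder D] : Type := {x : D // IsCompactElt x ∧ ¬ IsBot x}

/-- The interpretation `φ̂ ⊆ D` of a formula: `F, T, ∧, ⋁̇` become
`∅, D`, intersection and union. -/
def hat {D : Type} [PartialOrder D] : Fm (LAtom D) → Set D
  | Fm.atom x => Set.Ici x.val
  | Fm.tt => Set.univ
  | Fm.ff => ∅
  | Fm.conj φ ψ => hat φ ∩ hat ψ
  | Fm.disj f => ⋃ i, hat (f i)

/-- The formulae `L(P_D)` of the associated calculus: disjunctions only of
families with pairwise disjoint interpretations. -/
inductive DWF {D : Type} [PartialOrder D] : Fm (LAtom D) → Prop where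
  | atom (p : LAtom D) : DWF (Fm.atom p)
  | tt : DWF Fm.tt
  | ff : DWF Fm.ff
  | conj {φ ψ : Fm (LAtom D)} : DWF φ → DWF ψ → DWF (Fm.conj φ ψ)
  | disj {ι : Type} {f : ι → Fm (LAtom D)} : (∀ i, DWF (f i)) →
      (∀ i j, i ≠ j → hat (f i) ∩ hat (f j) = ∅) → DWF (Fm.disj f)

/-- Validity in the associated calculus: `ψ₁,…,ψₙ ⊢_D φ` iff
`ψ̂₁ ∩ … ∩ ψ̂ₙ ⊆ φ̂`. -/
def DSeq {D : Type} [PartialOrder D] (Γ : Set (Fm (LAtom D))) (φ : Fm (LAtom D)) : Prop :=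
  ⋂₀ (hat '' Γ) ⊆ hat φ

/-- A decomposable subset of `D`: the upper set `↑A` of a pairwise
inconsistent set `A` of compact elements. -/
def IsDecomposable {D : Type} [PartialOrder D] (U : Set D) : Prop :=
  ∃ A : Set D, (∀ a ∈ A, IsCompactElt a) ∧
    (∀ a ∈ A, ∀ b ∈ A, a ≠ b → Set.Ici a ∩ Set.Ici b = ∅) ∧
    U = ⋃ a ∈ A, Set.Ici a

/-- The conjunction `↑x₁ ∧ ↑x₂ ∧ … ∧ ↑xₙ` of a nonempty list of atoms. -/
def bigConj {P : Type} (x : P) (l : List P) : Fm P :=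
  l.foldl (fun φ y => Fm.conj φ (Fm.atom y)) (Fm.atom x)

lemma tt_mem_state {P : Type} {A : Set (Set P)} {T : Set (Fm P)}
    (hT : IsLogicalState (Fm.WF A) (Fm.Seq A) T) : Fm.tt ∈ T :=
  hT.s2 ⟨Fm.WF.tt, ∅, Set.empty_subset _, Set.finite_empty, Fm.Seq.rt⟩

lemma ff_not_mem_state {P : Type} {A : Set (Set P)} {T : Set (Fm P)}
    (hT : IsLogicalState (Fm.WF A) (Fm.Seq A) T) : Fm.ff ∉ T := by
  intro h
  apply hT.proper
  refine subset_antisymm hT.subset fun φ hφ => ?_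
  exact hT.s2 ⟨hφ, {Fm.ff}, by simpa using h, Set.finite_singleton _, Fm.Seq.lf φ⟩

lemma no_contra_pair {P : Type} {A : Set (Set P)} {T : Set (Fm P)}
    (hT : IsLogicalState (Fm.WF A) (Fm.Seq A) T) {φ ψ : Fm P}
    (hφ : φ ∈ T) (hψ : ψ ∈ T) (h : Fm.Seq A {φ, ψ} Fm.ff) : False := by
  refine ff_not_mem_state hT (hT.s2 ⟨Fm.WF.ff, {φ, ψ}, ?_, ?_, h⟩)
  · intro x hx; rcases hx with hx | hx <;> simp_all
  · exact (Set.finite_singleton ψ).insert φ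

/-- If `S` is a logical state and `X ⊆ S`, then
`[X]_S = ⋂{W : W a logical state, X ⊆ W ⊆ S}` is itself a logical state. -/
theorem stmt2 (P : Type) (A : Set (Set P)) (S : Set (Fm P))
    (hS : IsLogicalState (Fm.WF A) (Fm.Seq A) S)
    (X : Set (Fm P)) (hX : X ⊆ S) :
    IsLogicalState (Fm.WF A) (Fm.Seq A) (clIn (Fm.WF A) (Fm.Seq A) X S) := by
  have hSmem : S ∈ {T | IsLogicalState (Fm.WF A) (Fm.Seq A) T ∧ X ⊆ T ∧ T ⊆ S} :=
    ⟨hS, hX, subset_rfl⟩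
  have hclS : clIn (Fm.WF A) (Fm.Seq A) X S ⊆ S := fun φ hφ => hφ S hSmem
  constructor
  · exact ⟨Fm.tt, fun T hT => tt_mem_state hT.1⟩
  · exact hclS.trans hS.subset
  · intro h
    obtain ⟨φ, hφW, hφS⟩ : ∃ φ, Fm.WF A φ ∧ φ ∉ S := by
      by_contra hc
      push_neg at hc
      exact hS.proper (subset_antisymm hS.subset fun ψ hψ => hc ψ hψ)
    exact hφS (hclS (h ▸ hφW))
  · intro ι f hconj hdisj hsat hmem
    obtain ⟨i₀, hi₀⟩ := hS.s1 ι f hconj hdisj hsat (hmem S hSmem)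
    refine ⟨i₀, fun T hT => ?_⟩
    obtain ⟨i, hi⟩ := hT.1.s1 ι f hconj hdisj hsat (hmem T hT)
    rcases eq_or_ne i i₀ with rfl | hne
    · exact hi
    · exact absurd (no_contra_pair hS (hT.2.2 hi) hi₀ (hdisj i i₀ hne)) not_false
  · intro φ hφ T hT
    obtain ⟨hW, Γ, hΓ, hfin, hseq⟩ := hφ
    exact hT.1.s2 ⟨hW, Γ, fun x hx => hΓ hx T hT, hfin, hseq⟩
end

section
/- If μ is an irreducible conjunction in a disjunctive sequent calculus (L(P),⊢), then the set {μ}[⊢] is a logical state. -/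
/-- From a subsingleton context contained in `{μ}` to `{μ}` itself. -/
lemma seq_of_subset_singleton {P : Type} {A : Set (Set P)} {μ φ : Fm P}
    {Γ : Set (Fm P)} (hΓ : Γ ⊆ {μ}) (h : Fm.Seq A Γ φ) : Fm.Seq A {μ} φ := by
  have : insert μ Γ = ({μ} : Set (Fm P)) := by
    rw [Set.insert_eq]
    exact Set.union_eq_self_of_subset_right hΓ
  have h' := Fm.Seq.lwk μ h
  rwa [this] at h'

/-- Cut a finite context against `{μ}`. -/
lemma seq_cut_finite {P : Type} {A : Set (Set P)} (μ : Fm P) {φ : Fm P}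
    {Γ : Set (Fm P)} (hfin : Γ.Finite) :
    Fm.Seq A (insert μ Γ) φ → (∀ γ ∈ Γ, Fm.Seq A {μ} γ) → Fm.Seq A {μ} φ := by
  classical
  have key : ∀ s : Finset (Fm P),
      Fm.Seq A (insert μ ↑s) φ → (∀ γ ∈ (s : Set (Fm P)), Fm.Seq A {μ} γ) →
      Fm.Seq A {μ} φ := by
    intro s
    induction s using Finset.induction_on with
    | empty =>
      intro h _
      simpa using h
    | @insert γ s' _ ih =>
      intro h hall
      have hγ : Fm.Seq A {μ} γ := hall γ (by simp)
      have h' : Fm.Seq A (insert γ (insert μ ↑s')) φ := by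
        rw [Set.insert_comm]
        simpa using h
      have hcut := Fm.Seq.cut hγ h'
      have heq : ({μ} : Set (Fm P)) ∪ insert μ ↑s' = insert μ (↑s' : Set (Fm P)) := by
        rw [Set.insert_eq, ← Set.union_assoc, Set.union_self, ← Set.insert_eq]
      rw [heq] at hcut
      exact ih hcut (fun γ' hγ' => hall γ' (by simp [hγ']))
  intro h hall
  have hΓ : Γ = ↑hfin.toFinset := by simp
  exact key hfin.toFinset (by rw [← hΓ]; exact h) (by rw [← hΓ]; exact hall)

/-- If `μ` is an irreducible conjunction in a disjunctive sequent
calculus `(L(P),⊢)`, then `{μ}[⊢]` is a logical state. -/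
theorem stmt5 (P : Type) (A : Set (Set P)) (μ : Fm P)
    (hμ : IsIrredConj (Fm.WF A) (Fm.Seq A) μ) :
    IsLogicalState (Fm.WF A) (Fm.Seq A) (entClose (Fm.WF A) (Fm.Seq A) {μ}) := by
  have hWμ : Fm.WF A μ := hμ.1.2.1
  have hnotcontra : ¬ Fm.Seq A {μ} Fm.ff := fun h => hμ.1.2.2.2 ⟨hWμ, h⟩
  constructor
  · exact ⟨Fm.tt, Fm.WF.tt, ∅, by simp, Set.finite_empty, Fm.Seq.rt⟩
  · exact fun φ hφ => hφ.1
  · intro heq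
    have : Fm.ff ∈ entClose (Fm.WF A) (Fm.Seq A) {μ} := by
      rw [heq]; exact Fm.WF.ff
    obtain ⟨_, Γ, hΓ, _, hseq⟩ := this
    exact hnotcontra (seq_of_subset_singleton hΓ hseq)
  · intro ι f hconj hdisj _ hmem
    obtain ⟨hW, Γ, hΓ, _, hseq⟩ := hmem
    have hseq' : Fm.Seq A {μ} (Fm.disj f) := seq_of_subset_singleton hΓ hseq
    obtain ⟨i, hi⟩ := hμ.2 ι f (fun i => (hconj i).2.1) hdisj hseq'
    exact ⟨i, (hconj i).2.1, {μ}, subset_rfl, Set.finite_singleton μ, hi⟩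
  · intro φ hφ
    obtain ⟨hW, Γ, hΓ, hfin, hseq⟩ := hφ
    refine ⟨hW, {μ}, subset_rfl, Set.finite_singleton μ, ?_⟩
    have hall : ∀ γ ∈ Γ, Fm.Seq A {μ} γ := by
      intro γ hγ
      obtain ⟨_, Δ, hΔ, _, hs⟩ := hΓ hγ
      exact seq_of_subset_singleton hΔ hs
    exact seq_cut_finite μ hfin (Fm.Seq.lwk μ hseq) hall
end

section
/- For any disjunctive sequent calculus (L(P),⊢), the family |(L(P),⊢)| of all logical states, ordered by set inclusion, is a pointed dcpo: Tau(P), the set of tautologies, is its least element, and the supremum of any directed family of logical states is its union. -/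
/-!
Tautologies form the least logical state: every state contains `T` and is closed under
entailment, while `T ⊬ F` by soundness for the valuation making every atom false. A directed
union of states is again a state, since the finitely many premises of a sequent already lie in a
single member of the family.
-/

namespace Fm

variable {P : Type} {A : Set (Set P)}

def HoldsAtomsFalse : Fm P → Prop
  | atom _ => False
  | tt => True
  | ff => False
  | conj φ ψ => HoldsAtomsFalse φ ∧ HoldsAtomsFalse ψ
  | disj f => ∃ i, HoldsAtomsFalse (f i)

/-- Sound because every disjointness assumption mentions at least one atom. -/
theorem Seq.holdsAtomsFalse {Γ : Set (Fm P)} {φ : Fm P} (h : Seq A Γ φ)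
    (hΓ : ∀ ψ ∈ Γ, HoldsAtomsFalse ψ) : HoldsAtomsFalse φ := by
  induction h with
  | ax _ _ hne =>
    obtain ⟨p, hp⟩ := hne
    exact hΓ (atom p) ⟨p, hp, rfl⟩
  | id φ => exact hΓ φ rfl
  | lwk _ _ ih => exact ih fun ψ hψ => hΓ ψ (Set.mem_insert_of_mem _ hψ)
  | cut _ _ ih₁ ih₂ =>
    refine ih₂ fun ψ hψ => ?_
    rcases hψ with rfl | hψ
    · exact ih₁ fun θ hθ => hΓ θ (Or.inl hθ)
    · exact hΓ ψ (Or.inr hψ)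
  | lf _ => exact (hΓ ff rfl).elim
  | rt => trivial
  | landl _ ih =>
    obtain ⟨hφ, hψ⟩ := hΓ _ (Set.mem_insert _ _)
    refine ih fun θ hθ => ?_
    rcases hθ with rfl | rfl | hθ
    · exact hφ
    · exact hψ
    · exact hΓ θ (Set.mem_insert_of_mem _ hθ)
  | randr _ _ ih₁ ih₂ =>
    exact ⟨ih₁ fun ψ hψ => hΓ ψ (Or.inl hψ), ih₂ fun ψ hψ => hΓ ψ (Or.inr hψ)⟩
  | ldisj _ _ ih _ =>
    obtain ⟨i, hi⟩ := hΓ _ (Set.mem_insert _ _)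
    refine ih i fun ψ hψ => ?_
    rcases hψ with rfl | hψ
    · exact hi
    · exact hΓ ψ (Set.mem_insert_of_mem _ hψ)
  | rdisj i₀ _ _ ih _ => exact ⟨i₀, ih hΓ⟩

theorem Seq.not_tt_ff : ¬ Seq A {tt} ff :=
  fun h => h.holdsAtomsFalse fun _ hψ => hψ ▸ trivial

theorem Seq.tt_of_union_taut {Γ : Set (Fm P)} {φ : Fm P} (hΓ : Γ.Finite)
    (htaut : ∀ γ ∈ Γ, Seq A {tt} γ) (h : Seq A (Γ ∪ {tt}) φ) : Seq A {tt} φ := by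
  induction Γ, hΓ using Set.Finite.induction_on with
  | empty => simpa using h
  | @insert γ Γ _ _ ih =>
    have hcut := Seq.cut (htaut γ (Set.mem_insert _ _)) (Set.insert_union ▸ h)
    rw [Set.singleton_union, Set.insert_eq_of_mem (by simp)] at hcut
    exact ih (fun δ hδ => htaut δ (Set.mem_insert_of_mem _ hδ)) hcut

end Fm

namespace IsLogicalState

variable {P : Type} {A : Set (Set P)} {S : Set (Fm P)}

theorem tt_mem (hS : IsLogicalState (Fm.WF A) (Fm.Seq A) S) : Fm.tt ∈ S :=
  hS.s2 ⟨Fm.WF.tt, ∅, Set.empty_subset _, Set.finite_empty, Fm.Seq.rt⟩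

theorem ff_notMem (hS : IsLogicalState (Fm.WF A) (Fm.Seq A) S) : Fm.ff ∉ S := fun hff =>
  hS.proper <| hS.subset.antisymm fun φ hφ =>
    hS.s2 ⟨hφ, {Fm.ff}, Set.singleton_subset_iff.2 hff, Set.finite_singleton _, Fm.Seq.lf φ⟩

theorem taut_subset (hS : IsLogicalState (Fm.WF A) (Fm.Seq A) S) :
    {φ | Taut (Fm.WF A) (Fm.Seq A) φ} ⊆ S := fun _ hφ =>
  hS.s2 ⟨hφ.1, {Fm.tt}, Set.singleton_subset_iff.2 hS.tt_mem, Set.finite_singleton _, hφ.2⟩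

end IsLogicalState

section

variable {P : Type} {A : Set (Set P)}

theorem isLogicalState_taut :
    IsLogicalState (Fm.WF A) (Fm.Seq A) {φ | Taut (Fm.WF A) (Fm.Seq A) φ} where
  nonempty := ⟨Fm.tt, Fm.WF.tt, Fm.Seq.id _⟩
  subset _ hφ := hφ.1
  proper h := by
    have hff : Fm.ff ∈ {φ | Taut (Fm.WF A) (Fm.Seq A) φ} := h ▸ (Fm.WF.ff : Fm.WF A Fm.ff)
    exact Fm.Seq.not_tt_ff hff.2
  s1 _ _ _ _ hsat hmem := (hsat.2.1 hmem).elim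
  s2 := by
    rintro φ ⟨hφ, Γ, hΓ, hfin, hseq⟩
    refine ⟨hφ, Fm.Seq.tt_of_union_taut hfin (fun γ hγ => (hΓ hγ).2) ?_⟩
    rw [Set.union_singleton]
    exact hseq.lwk Fm.tt

theorem isLogicalState_sUnion {𝒮 : Set (Set (Fm P))} (hne : 𝒮.Nonempty)
    (hdir : DirectedOn (· ⊆ ·) 𝒮) (h𝒮 : ∀ S ∈ 𝒮, IsLogicalState (Fm.WF A) (Fm.Seq A) S) :
    IsLogicalState (Fm.WF A) (Fm.Seq A) (⋃₀ 𝒮) where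
  nonempty := by
    obtain ⟨S, hS⟩ := hne
    exact (h𝒮 S hS).nonempty.mono (Set.subset_sUnion_of_mem hS)
  subset := Set.sUnion_subset fun S hS => (h𝒮 S hS).subset
  proper h := by
    obtain ⟨S, hS, hff⟩ := Set.mem_sUnion.1 (h ▸ Fm.WF.ff : Fm.ff ∈ ⋃₀ 𝒮)
    exact (h𝒮 S hS).ff_notMem hff
  s1 ι f hconj hdisj hsat hmem := by
    obtain ⟨S, hS, hfS⟩ := Set.mem_sUnion.1 hmem
    obtain ⟨i, hi⟩ := (h𝒮 S hS).s1 ι f hconj hdisj hsat hfS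
    exact ⟨i, Set.mem_sUnion_of_mem hi hS⟩
  s2 := by
    rintro φ ⟨hφ, Γ, hΓ, hfin, hseq⟩
    obtain ⟨S, hS, hΓS⟩ := hdir.exists_mem_subset_of_finite_of_subset_sUnion hne hfin hΓ
    exact Set.mem_sUnion_of_mem ((h𝒮 S hS).s2 ⟨hφ, Γ, hΓS, hfin, hseq⟩) hS

end

/-- The family of all logical states, ordered by inclusion, is a
pointed dcpo: `Tau(P)` is its least element, and the supremum of any directed
family of logical states is its union. -/
theorem stmt6 (P : Type) (A : Set (Set P)) :
    IsLogicalState (Fm.WF A) (Fm.Seq A) {φ | Taut (Fm.WF A) (Fm.Seq A) φ} ∧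
    (∀ S : Set (Fm P), IsLogicalState (Fm.WF A) (Fm.Seq A) S →
      {φ | Taut (Fm.WF A) (Fm.Seq A) φ} ⊆ S) ∧
    (∀ 𝒟 : Set (LSt P A), 𝒟.Nonempty → DirectedOn (· ≤ ·) 𝒟 →
      ∃ s : LSt P A, IsLUB 𝒟 s ∧ (s : Set (Fm P)) = ⋃₀ (Subtype.val '' 𝒟)) := by
  refine ⟨isLogicalState_taut, fun _ hS => hS.taut_subset, fun 𝒟 hne hdir => ?_⟩
  have hstate := isLogicalState_sUnion (hne.image Subtype.val)
    (directedOn_image.2 hdir) (by rintro _ ⟨S, -, rfl⟩; exact S.2)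
  refine ⟨⟨_, hstate⟩, ⟨fun S hS => ?_, fun T hT => ?_⟩, rfl⟩
  · exact Set.subset_sUnion_of_mem (Set.mem_image_of_mem _ hS)
  · exact Set.sUnion_subset (by rintro _ ⟨S, hS, rfl⟩; exact hT hS)
end

section
/- Let (L(P),⊢) be a disjunctive sequent calculus and S a logical state. Then the family {[Γ]_S : Γ a finite subset of S} is directed under set inclusion, and its union equals S, where [Γ]_S = ⋂{W : W is a logical state and Γ ⊆ W ⊆ S}. -/
/-- For a logical state `S`, the family `{[Γ]_S : Γ finite ⊆ S}`
is (nonempty and) directed under inclusion, and its union is `S`. -/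
theorem stmt8 (P : Type) (A : Set (Set P)) (S : Set (Fm P))
    (hS : IsLogicalState (Fm.WF A) (Fm.Seq A) S) :
    {T : Set (Fm P) | ∃ Γ : Set (Fm P), Γ.Finite ∧ Γ ⊆ S ∧
      T = clIn (Fm.WF A) (Fm.Seq A) Γ S}.Nonempty ∧
    DirectedOn (· ⊆ ·) {T : Set (Fm P) | ∃ Γ : Set (Fm P), Γ.Finite ∧ Γ ⊆ S ∧
      T = clIn (Fm.WF A) (Fm.Seq A) Γ S} ∧
    ⋃₀ {T : Set (Fm P) | ∃ Γ : Set (Fm P), Γ.Finite ∧ Γ ⊆ S ∧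
      T = clIn (Fm.WF A) (Fm.Seq A) Γ S} = S := by
  have hsub : ∀ Γ : Set (Fm P), Γ ⊆ S → clIn (Fm.WF A) (Fm.Seq A) Γ S ⊆ S := by
    intro Γ hΓ
    intro φ hφ
    exact hφ S ⟨hS, hΓ, le_refl S⟩
  have hmono : ∀ Γ₁ Γ₂ : Set (Fm P), Γ₁ ⊆ Γ₂ →
      clIn (Fm.WF A) (Fm.Seq A) Γ₁ S ⊆ clIn (Fm.WF A) (Fm.Seq A) Γ₂ S := by
    intro Γ₁ Γ₂ h φ hφ T hT
    exact hφ T ⟨hT.1, h.trans hT.2.1, hT.2.2⟩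
  refine ⟨⟨_, ∅, Set.finite_empty, Set.empty_subset S, rfl⟩, ?_, ?_⟩
  · rintro T₁ ⟨Γ₁, hf₁, hs₁, rfl⟩ T₂ ⟨Γ₂, hf₂, hs₂, rfl⟩
    exact ⟨clIn (Fm.WF A) (Fm.Seq A) (Γ₁ ∪ Γ₂) S,
      ⟨Γ₁ ∪ Γ₂, hf₁.union hf₂, Set.union_subset hs₁ hs₂, rfl⟩,
      hmono _ _ Set.subset_union_left, hmono _ _ Set.subset_union_right⟩
  · apply Set.Subset.antisymm
    · rintro φ ⟨T, ⟨Γ, _, hΓ, rfl⟩, hφ⟩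
      exact hsub Γ hΓ hφ
    · intro φ hφ
      refine ⟨clIn (Fm.WF A) (Fm.Seq A) {φ} S,
        ⟨{φ}, Set.finite_singleton φ, Set.singleton_subset_iff.2 hφ, rfl⟩, ?_⟩
      intro T hT
      exact hT.2.1 rfl
end

section
/- Let (D,≤) be an algebraic L-domain and let (L(P_D),⊢_D) be its associated calculus. Then {φ̂ : φ ∈ L(P_D)} = U(D), the collection of decomposable subsets of D, and (L(P_D),⊢_D) is a disjunctive sequent calculus: L(P_D) is closed under all the formula-formation rules and the valid sequents of ⊢_D are closed under all the inference rules (Ax), (Id), (Lwk), (Cut), (LF), (RT), (L∧), (R∧), (L⋁̇), (R⋁̇). -/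
section AuxStmt10

variable {D : Type} [PartialOrder D]

/-- `m` is a minimal upper bound of `a` and `b`. -/
def MinUB (a b m : D) : Prop :=
  a ≤ m ∧ b ≤ m ∧ ∀ u, a ≤ u → b ≤ u → u ≤ m → m ≤ u

lemma minUB_exists (hD : IsAlgebraicLDomain D) {a b x : D} (ha : a ≤ x) (hb : b ≤ x) :
    ∃ m, MinUB a b m ∧ m ≤ x := by
  obtain ⟨s, hsx, hub, hleast⟩ := hD.2 x {a, b} (by
    intro t ht
    rcases ht with rfl | rfl
    · exact ha
    · exact hb)
  refine ⟨s, ⟨hub a (by simp), hub b (by simp), ?_⟩, hsx⟩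
  intro u hau hbu hus
  exact hleast u (le_trans hus hsx) (by rintro t (rfl | rfl) <;> assumption)

lemma minUB_unique (hD : IsAlgebraicLDomain D) {a b m m' x : D}
    (hm : MinUB a b m) (hm' : MinUB a b m') (h1 : m ≤ x) (h2 : m' ≤ x) : m = m' := by
  obtain ⟨s, hsx, hub, hleast⟩ := hD.2 x {a, b} (by
    rintro t (rfl | rfl)
    · exact le_trans hm.1 h1
    · exact le_trans hm.2.1 h1)
  have hsa : a ≤ s := hub a (by simp)
  have hsb : b ≤ s := hub b (by simp)
  have hsm : s ≤ m := hleast m h1 (by rintro t (rfl | rfl); exacts [hm.1, hm.2.1])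
  have hsm' : s ≤ m' := hleast m' h2 (by rintro t (rfl | rfl); exacts [hm'.1, hm'.2.1])
  have h3 : m ≤ s := hm.2.2 s hsa hsb hsm
  have h4 : m' ≤ s := hm'.2.2 s hsa hsb hsm'
  exact (le_antisymm h3 hsm).trans (le_antisymm hsm' h4)

lemma minUB_compact (hD : IsAlgebraicLDomain D) {a b m : D}
    (ha : IsCompactElt a) (hb : IsCompactElt b) (hm : MinUB a b m) : IsCompactElt m := by
  intro d hne hdir s hs hms
  obtain ⟨d1, hd1, had1⟩ := ha d hne hdir s hs (le_trans hm.1 hms)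
  obtain ⟨d2, hd2, hbd2⟩ := hb d hne hdir s hs (le_trans hm.2.1 hms)
  obtain ⟨e, he, h1e, h2e⟩ := hdir d1 hd1 d2 hd2
  obtain ⟨me, hme, hmes⟩ := minUB_exists hD (le_trans had1 h1e) (le_trans hbd2 h2e)
  have heq : m = me := minUB_unique hD hm hme hms (le_trans hmes (hs.1 he))
  exact ⟨e, he, heq ▸ hmes⟩

lemma dwf_decomp (hD : IsAlgebraicLDomain D) {φ : Fm (LAtom D)} (h : DWF φ) :
    IsDecomposable (hat φ) := by
  induction h with
  | atom p =>
    refine ⟨{p.val}, ?_, ?_, ?_⟩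
    · rintro a rfl; exact p.2.1
    · rintro a rfl b rfl hab; exact absurd rfl hab
    · simp [hat]
  | tt =>
    obtain ⟨bot, hbot⟩ := hD.1.1
    refine ⟨{bot}, ?_, ?_, ?_⟩
    · rintro a rfl
      intro d hne _ s _ _
      obtain ⟨y, hy⟩ := hne
      exact ⟨y, hy, hbot y⟩
    · rintro a rfl b rfl hab; exact absurd rfl hab
    · ext x; simp [hat, hbot x]
  | ff => exact ⟨∅, by simp, by simp, by simp [hat]⟩
  | @conj φ1 ψ1 hφ hψ ih1 ih2 =>
    obtain ⟨A, hAc, hAi, hAu⟩ := ih1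
    obtain ⟨B, hBc, hBi, hBu⟩ := ih2
    refine ⟨{m | ∃ a ∈ A, ∃ b ∈ B, MinUB a b m}, ?_, ?_, ?_⟩
    · rintro m ⟨a, ha, b, hb, hm⟩
      exact minUB_compact hD (hAc a ha) (hBc b hb) hm
    · rintro m ⟨a, ha, b, hb, hm⟩ m' ⟨a', ha', b', hb', hm'⟩ hne
      rw [Set.eq_empty_iff_forall_notMem]
      rintro x ⟨hx1, hx2⟩
      have hax : a ≤ x := le_trans hm.1 hx1
      have ha'x : a' ≤ x := le_trans hm'.1 hx2
      have hbx : b ≤ x := le_trans hm.2.1 hx1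
      have hb'x : b' ≤ x := le_trans hm'.2.1 hx2
      have haa : a = a' := by
        by_contra hc
        have := hAi a ha a' ha' hc
        exact absurd (this ▸ (Set.mem_inter hax ha'x)) (Set.notMem_empty x)
      have hbb : b = b' := by
        by_contra hc
        have := hBi b hb b' hb' hc
        exact absurd (this ▸ (Set.mem_inter hbx hb'x)) (Set.notMem_empty x)
      subst haa; subst hbb
      exact hne (minUB_unique hD hm hm' hx1 hx2)
    · show hat φ1 ∩ hat ψ1 = _
      ext x
      simp only [Set.mem_iUnion, Set.mem_Ici, Set.mem_setOf_eq, exists_prop, Set.mem_inter_iff]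
      constructor
      · rintro ⟨hx1, hx2⟩
        rw [hAu] at hx1; rw [hBu] at hx2
        simp only [Set.mem_iUnion, Set.mem_Ici, exists_prop] at hx1 hx2
        obtain ⟨a, ha, hax⟩ := hx1
        obtain ⟨b, hb, hbx⟩ := hx2
        obtain ⟨m, hm, hmx⟩ := minUB_exists hD hax hbx
        exact ⟨m, ⟨a, ha, b, hb, hm⟩, hmx⟩
      · rintro ⟨m, ⟨a, ha, b, hb, hm⟩, hmx⟩
        constructor
        · rw [hAu]
          simp only [Set.mem_iUnion, Set.mem_Ici, exists_prop]
          exact ⟨a, ha, le_trans hm.1 hmx⟩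
        · rw [hBu]
          simp only [Set.mem_iUnion, Set.mem_Ici, exists_prop]
          exact ⟨b, hb, le_trans hm.2.1 hmx⟩
  | @disj ι f hwf hdisj ih =>
    choose A hc hi hu using ih
    refine ⟨⋃ i, A i, ?_, ?_, ?_⟩
    · rintro a ha
      rw [Set.mem_iUnion] at ha
      obtain ⟨i, hai⟩ := ha
      exact hc i a hai
    · intro a ha b hb hab
      rw [Set.mem_iUnion] at ha hb
      obtain ⟨i, hai⟩ := ha
      obtain ⟨j, hbj⟩ := hb
      by_cases hij : i = j
      · subst hij; exact hi i a hai b hbj hab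
      · have h1 : Set.Ici a ⊆ hat (f i) := by
          rw [hu i]; exact Set.subset_biUnion_of_mem hai
        have h2 : Set.Ici b ⊆ hat (f j) := by
          rw [hu j]; exact Set.subset_biUnion_of_mem hbj
        have := hdisj i j hij
        rw [Set.eq_empty_iff_forall_notMem] at this ⊢
        intro x hx
        exact this x ⟨h1 hx.1, h2 hx.2⟩
    · show (⋃ i, hat (f i)) = _
      simp only [hu, Set.biUnion_iUnion]

lemma decomp_dwf {U : Set D} (h : IsDecomposable U) :
    ∃ φ : Fm (LAtom D), DWF φ ∧ hat φ = U := by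
  obtain ⟨A, hc, hi, rfl⟩ := h
  by_cases hbot : ∃ a ∈ A, IsBot a
  · obtain ⟨a, ha, hab⟩ := hbot
    refine ⟨Fm.tt, DWF.tt, ?_⟩
    ext x
    simp only [hat, Set.mem_univ, Set.mem_iUnion, Set.mem_Ici, exists_prop, true_iff]
    exact ⟨a, ha, hab x⟩
  · refine ⟨Fm.disj (ι := A)
      (fun a => Fm.atom ⟨a.val, hc a.val a.2, fun hb => hbot ⟨a.val, a.2, hb⟩⟩), ?_, ?_⟩
    · refine DWF.disj (fun i => DWF.atom _) ?_
      intro i j hij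
      exact hi i.val i.2 j.val j.2 (fun hv => hij (Subtype.ext hv))
    · show (⋃ i : A, Set.Ici i.val) = _
      rw [Set.biUnion_eq_iUnion]

lemma dseq_iff {Γ : Set (Fm (LAtom D))} {φ : Fm (LAtom D)} :
    DSeq Γ φ ↔ ∀ x, (∀ ψ ∈ Γ, x ∈ hat ψ) → x ∈ hat φ := by
  simp [DSeq, Set.subset_def, Set.sInter_image]

end AuxStmt10

/-- For the calculus `(L(P_D),⊢_D)` associated with an algebraic
L-domain `(D,≤)`: `{φ̂ : φ ∈ L(P_D)} = U(D)`, and the calculus is a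
disjunctive sequent calculus (formulae closed under the formation rules, valid
sequents closed under (Ax), (Id), (Lwk), (Cut), (LF), (RT), (L∧), (R∧),
(L⋁̇), (R⋁̇)). -/
theorem stmt10 (D : Type) [PartialOrder D] (hD : IsAlgebraicLDomain D) :
    ({U : Set D | ∃ φ : Fm (LAtom D), DWF φ ∧ hat φ = U} =
      {U : Set D | IsDecomposable U}) ∧
    -- (Ax)
    (∀ s : Set (LAtom D), s.Finite → s.Nonempty →
      ⋂₀ ((fun p : LAtom D => Set.Ici p.val) '' s) = ∅ →
      DSeq (Fm.atom '' s) Fm.ff) ∧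
    -- (Id)
    (∀ φ : Fm (LAtom D), DWF φ → DSeq {φ} φ) ∧
    -- (Lwk)
    (∀ (Γ : Set (Fm (LAtom D))) (φ ψ : Fm (LAtom D)), DWF φ →
      DSeq Γ ψ → DSeq (insert φ Γ) ψ) ∧
    -- (Cut)
    (∀ (Γ Δ : Set (Fm (LAtom D))) (φ ψ : Fm (LAtom D)),
      DSeq Γ φ → DSeq (insert φ Δ) ψ → DSeq (Γ ∪ Δ) ψ) ∧
    -- (LF)
    (∀ φ : Fm (LAtom D), DWF φ → DSeq {Fm.ff} φ) ∧
    -- (RT)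
    (DSeq (D := D) ∅ Fm.tt) ∧
    -- (L∧)
    (∀ (Γ : Set (Fm (LAtom D))) (φ ψ θ : Fm (LAtom D)),
      DSeq (insert φ (insert ψ Γ)) θ → DSeq (insert (Fm.conj φ ψ) Γ) θ) ∧
    -- (R∧)
    (∀ (Γ Δ : Set (Fm (LAtom D))) (φ ψ : Fm (LAtom D)),
      DSeq Γ φ → DSeq Δ ψ → DSeq (Γ ∪ Δ) (Fm.conj φ ψ)) ∧
    -- (L⋁̇)
    (∀ (Γ : Set (Fm (LAtom D))) (θ : Fm (LAtom D)) (ι : Type) (f : ι → Fm (LAtom D)),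
      (∀ i, DSeq (insert (f i) Γ) θ) → (∀ i j, i ≠ j → DSeq {f i, f j} Fm.ff) →
      DSeq (insert (Fm.disj f) Γ) θ) ∧
    -- (R⋁̇)
    (∀ (Γ : Set (Fm (LAtom D))) (ι : Type) (f : ι → Fm (LAtom D)) (i₀ : ι),
      DSeq Γ (f i₀) → (∀ i j, i ≠ j → DSeq {f i, f j} Fm.ff) →
      DSeq Γ (Fm.disj f)) ∧
    -- closure of formulae under provably disjoint disjunction
    (∀ (ι : Type) (f : ι → Fm (LAtom D)), (∀ i, DWF (f i)) →
      (∀ i j, i ≠ j → DSeq {f i, f j} Fm.ff) → DWF (Fm.disj f))     := by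
  refine ⟨?_, ?_, ?_, ?_, ?_, ?_, ?_, ?_, ?_, ?_, ?_, ?_⟩
  · ext U
    constructor
    · rintro ⟨φ, hφ, rfl⟩
      exact dwf_decomp hD hφ
    · exact fun h => decomp_dwf h
  · -- Ax
    intro s _ _ hemp
    have himg : hat '' (Fm.atom '' s) = (fun p : LAtom D => Set.Ici p.val) '' s := by
      rw [Set.image_image]; rfl
    show ⋂₀ (hat '' (Fm.atom '' s)) ⊆ hat Fm.ff
    rw [himg, hemp]
    exact Set.empty_subset _
  · -- Id
    intro φ _
    rw [dseq_iff]
    exact fun x h => h φ rfl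
  · -- Lwk
    intro Γ φ ψ _ h
    rw [dseq_iff] at h ⊢
    exact fun x hx => h x (fun θ hθ => hx θ (Set.mem_insert_of_mem _ hθ))
  · -- Cut
    intro Γ Δ φ ψ h1 h2
    rw [dseq_iff] at h1 h2 ⊢
    intro x hx
    refine h2 x ?_
    rintro θ (rfl | hθ)
    · exact h1 x (fun θ' hθ' => hx θ' (Set.mem_union_left _ hθ'))
    · exact hx θ (Set.mem_union_right _ hθ)
  · -- LF
    intro φ _
    rw [dseq_iff]
    intro x hx
    exact absurd (hx Fm.ff rfl) (Set.notMem_empty x)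
  · -- RT
    rw [dseq_iff]
    intro x _
    exact Set.mem_univ x
  · -- L∧
    intro Γ φ ψ θ h
    rw [dseq_iff] at h ⊢
    intro x hx
    have hc : x ∈ hat (Fm.conj φ ψ) := hx _ (Set.mem_insert _ _)
    refine h x ?_
    rintro θ' (rfl | rfl | hθ')
    · exact hc.1
    · exact hc.2
    · exact hx θ' (Set.mem_insert_of_mem _ hθ')
  · -- R∧
    intro Γ Δ φ ψ h1 h2
    rw [dseq_iff] at h1 h2 ⊢
    intro x hx
    exact ⟨h1 x (fun θ hθ => hx θ (Set.mem_union_left _ hθ)),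
      h2 x (fun θ hθ => hx θ (Set.mem_union_right _ hθ))⟩
  · -- L⋁̇
    intro Γ θ ι f h _
    rw [dseq_iff]
    intro x hx
    have hd : x ∈ hat (Fm.disj f) := hx _ (Set.mem_insert _ _)
    obtain ⟨i, hi⟩ : ∃ i, x ∈ hat (f i) := by
      simpa [hat] using hd
    refine (dseq_iff.1 (h i)) x ?_
    rintro θ' (rfl | hθ')
    · exact hi
    · exact hx θ' (Set.mem_insert_of_mem _ hθ')
  · -- R⋁̇
    intro Γ ι f i₀ h _
    rw [dseq_iff] at h ⊢
    intro x hx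
    have : x ∈ hat (f i₀) := h x hx
    show x ∈ ⋃ i, hat (f i)
    exact Set.mem_iUnion.2 ⟨i₀, this⟩
  · -- closure under disjunction
    intro ι f hwf hdisj
    refine DWF.disj hwf ?_
    intro i j hij
    have := hdisj i j hij
    rw [dseq_iff] at this
    rw [Set.eq_empty_iff_forall_notMem]
    rintro x ⟨hx1, hx2⟩
    exact absurd (this x (by rintro θ (rfl | rfl) <;> assumption)) (Set.notMem_empty x)
end

section
/- For the disjunctive sequent calculus (L(P_D),⊢_D) associated with an algebraic L-domain (D,≤): (1) a formula φ is a tautology iff φ̂ = D; (2) φ is a contradiction iff φ̂ = ∅; (3) φ is satisfiable iff φ̂ = ↑A for some nonempty pairwise inconsistent subset A of K*(D); (4) two formulae φ and ψ are logically equivalent iff φ̂ = ψ̂; (5) for any finite {x_1,…,x_n} ⊆ K*(D), the formula ↑x_1 ∧ ↑x_2 ∧ … ∧ ↑x_n is a conjunction iff {x_1,…,x_n} has an upper bound in D. -/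
/-!
Validity of `φ ⊢ ψ` is the inclusion `φ̂ ⊆ ψ̂`, so (1), (2) and (4) are immediate, and (5)
reduces to computing the interpretation of `↑x₁ ∧ … ∧ ↑xₙ` as the set of common upper bounds
of the `xᵢ`. For (3) one shows by induction on formulae that every `φ̂` is a disjoint union of
cones `↑a` over a pairwise inconsistent set of compact elements. The only nontrivial case is
conjunction: in an L-domain every common upper bound `z` of `a` and `b` lies above exactly one
minimal upper bound of `{a, b}` (the supremum of `{a, b}` in `↓z`), and minimal upper bounds of
compact elements are compact, so `↑a ∩ ↑b` is the disjoint union of the cones over the minimal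
upper bounds of `{a, b}`.
-/

open Set Function

section LDomain

variable {D : Type*} [PartialOrder D]

lemma mem_upperBounds_pair {a b z : D} : z ∈ upperBounds {a, b} ↔ a ≤ z ∧ b ≤ z := by
  simp [upperBounds_insert]

lemma isCompactElt_of_isBot {b : D} (hb : IsBot b) : IsCompactElt b := by
  rintro d ⟨y, hy⟩ - - - -
  exact ⟨y, hy, hb y⟩

lemma minimal_upperBounds_of_isLeast {s : Set D} {z m : D}
    (hm : IsLeast (upperBounds s ∩ Iic z) m) : Minimal (· ∈ upperBounds s) m :=
  ⟨hm.1.1, fun _ hu hum => hm.2 ⟨hu, hum.trans hm.1.2⟩⟩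

namespace IsAlgebraicLDomain

variable (hD : IsAlgebraicLDomain D)
include hD

lemma exists_isBot : ∃ b : D, IsBot b :=
  hD.1.1

lemma exists_isLeast_upperBounds_inter_Iic {s : Set D} {z : D} (hz : z ∈ upperBounds s) :
    ∃ m, IsLeast (upperBounds s ∩ Iic z) m := by
  obtain ⟨m, hmz, hm_ub, hm_least⟩ := hD.2 z s hz
  exact ⟨m, ⟨hm_ub, hmz⟩, fun u hu => hm_least u hu.2 hu.1⟩

lemma isLeast_of_minimal_upperBounds {s : Set D} {m z : D}
    (hm : Minimal (· ∈ upperBounds s) m) (hmz : m ≤ z) :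
    IsLeast (upperBounds s ∩ Iic z) m := by
  obtain ⟨m', hm'⟩ := hD.exists_isLeast_upperBounds_inter_Iic (upperBounds_mono_mem hmz hm.1)
  have hm'm : m' ≤ m := hm'.2 ⟨hm.1, hmz⟩
  rwa [le_antisymm (hm.2 hm'.1.1 hm'm) hm'm]

lemma existsUnique_minimal_upperBounds_le {s : Set D} {z : D} (hz : z ∈ upperBounds s) :
    ∃! m, Minimal (· ∈ upperBounds s) m ∧ m ≤ z := by
  obtain ⟨m, hm⟩ := hD.exists_isLeast_upperBounds_inter_Iic hz
  refine ⟨m, ⟨minimal_upperBounds_of_isLeast hm, hm.1.2⟩, fun m' ⟨hm'min, hm'z⟩ => ?_⟩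
  exact (hD.isLeast_of_minimal_upperBounds hm'min hm'z).unique hm

lemma isCompactElt_of_minimal_upperBounds_pair {a b m : D} (ha : IsCompactElt a)
    (hb : IsCompactElt b) (hm : Minimal (· ∈ upperBounds {a, b}) m) : IsCompactElt m := by
  intro d hd hdir t ht hmt
  have hm_ub := mem_upperBounds_pair.1 hm.1
  obtain ⟨da, hda, hada⟩ := ha d hd hdir t ht (hm_ub.1.trans hmt)
  obtain ⟨db, hdb, hbdb⟩ := hb d hd hdir t ht (hm_ub.2.trans hmt)
  obtain ⟨e, he, hdae, hdbe⟩ := hdir da hda db hdb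
  -- `m` is the least upper bound of `{a, b}` below `t`, so it lies below the least one below `e`
  obtain ⟨m', hm'⟩ := hD.exists_isLeast_upperBounds_inter_Iic
    (mem_upperBounds_pair.2 ⟨hada.trans hdae, hbdb.trans hdbe⟩)
  have hmm' : m ≤ m' := (hD.isLeast_of_minimal_upperBounds hm hmt).2
    ⟨hm'.1.1, hm'.1.2.trans (ht.1 he)⟩
  exact ⟨e, he, hmm'.trans hm'.1.2⟩

end IsAlgebraicLDomain

end LDomain

section Decomposable

variable {D : Type} [PartialOrder D]

lemma eq_of_le_of_le_of_pairwise_inconsistent {A : Set D}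
    (hA : ∀ a ∈ A, ∀ b ∈ A, a ≠ b → Ici a ∩ Ici b = ∅) {a b z : D} (ha : a ∈ A) (hb : b ∈ A)
    (haz : a ≤ z) (hbz : b ≤ z) : a = b := by
  by_contra hab
  exact (eq_empty_iff_forall_notMem.1 (hA a ha b hb hab)) z ⟨haz, hbz⟩

lemma isDecomposable_empty : IsDecomposable (∅ : Set D) :=
  ⟨∅, by simp, by simp, by simp⟩

lemma isDecomposable_Ici {x : D} (hx : IsCompactElt x) : IsDecomposable (Ici x) :=
  ⟨{x}, by simpa, by simp, by simp⟩

lemma isDecomposable_univ_of_isBot {b : D} (hb : IsBot b) : IsDecomposable (univ : Set D) :=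
  hb.Ici_eq ▸ isDecomposable_Ici (isCompactElt_of_isBot hb)

lemma IsDecomposable.iUnion {ι : Type*} {U : ι → Set D} (hU : ∀ i, IsDecomposable (U i))
    (hdisj : Pairwise (Disjoint on U)) : IsDecomposable (⋃ i, U i) := by
  choose A hA_compact hA_incons hA_eq using hU
  refine ⟨⋃ i, A i, ?_, ?_, ?_⟩
  · simp only [mem_iUnion]
    rintro a ⟨i, ha⟩
    exact hA_compact i a ha
  · simp only [mem_iUnion]
    rintro a ⟨i, ha⟩ b ⟨j, hb⟩ hab
    rcases eq_or_ne i j with rfl | hij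
    · exact hA_incons i a ha b hb hab
    · refine disjoint_iff_inter_eq_empty.1 ((hdisj hij).mono ?_ ?_)
      · exact hA_eq i ▸ subset_biUnion_of_mem (u := fun a => Ici a) ha
      · exact hA_eq j ▸ subset_biUnion_of_mem (u := fun a => Ici a) hb
  · rw [biUnion_iUnion]
    exact iUnion_congr hA_eq

lemma IsAlgebraicLDomain.isDecomposable_inter (hD : IsAlgebraicLDomain D) {U V : Set D}
    (hU : IsDecomposable U) (hV : IsDecomposable V) : IsDecomposable (U ∩ V) := by
  obtain ⟨A, hA_compact, hA_incons, rfl⟩ := hU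
  obtain ⟨B, hB_compact, hB_incons, rfl⟩ := hV
  refine ⟨{m | ∃ a ∈ A, ∃ b ∈ B, Minimal (· ∈ upperBounds {a, b}) m}, ?_, ?_, ?_⟩
  · rintro m ⟨a, ha, b, hb, hm⟩
    exact hD.isCompactElt_of_minimal_upperBounds_pair (hA_compact a ha) (hB_compact b hb) hm
  · rintro m ⟨a, ha, b, hb, hm⟩ m' ⟨a', ha', b', hb', hm'⟩ hmm'
    refine eq_empty_iff_forall_notMem.2 fun z ⟨hmz, hm'z⟩ => hmm' ?_
    have hm_ub := mem_upperBounds_pair.1 hm.1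
    have hm'_ub := mem_upperBounds_pair.1 hm'.1
    obtain rfl := eq_of_le_of_le_of_pairwise_inconsistent hA_incons ha ha'
      (hm_ub.1.trans hmz) (hm'_ub.1.trans hm'z)
    obtain rfl := eq_of_le_of_le_of_pairwise_inconsistent hB_incons hb hb'
      (hm_ub.2.trans hmz) (hm'_ub.2.trans hm'z)
    exact (hD.existsUnique_minimal_upperBounds_le (upperBounds_mono_mem hmz hm.1)).unique
      ⟨hm, hmz⟩ ⟨hm', hm'z⟩
  · ext z
    simp only [mem_inter_iff, mem_iUnion, mem_Ici, mem_ofPred_eq, exists_prop]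
    constructor
    · rintro ⟨⟨a, ha, haz⟩, ⟨b, hb, hbz⟩⟩
      obtain ⟨m, ⟨hm, hmz⟩, -⟩ :=
        hD.existsUnique_minimal_upperBounds_le (mem_upperBounds_pair.2 ⟨haz, hbz⟩)
      exact ⟨m, ⟨a, ha, b, hb, hm⟩, hmz⟩
    · rintro ⟨m, ⟨a, ha, b, hb, hm⟩, hmz⟩
      have hm_ub := mem_upperBounds_pair.1 hm.1
      exact ⟨⟨a, ha, hm_ub.1.trans hmz⟩, ⟨b, hb, hm_ub.2.trans hmz⟩⟩

lemma IsDecomposable.nonempty_and_ne_univ_iff {U : Set D}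
    (hU : IsDecomposable U) {b : D} (hb : IsBot b) :
    U.Nonempty ∧ U ≠ univ ↔ ∃ A : Set D, A.Nonempty ∧
      (∀ a ∈ A, IsCompactElt a ∧ ¬ IsBot a) ∧
      (∀ a ∈ A, ∀ b ∈ A, a ≠ b → Ici a ∩ Ici b = ∅) ∧ U = ⋃ a ∈ A, Ici a := by
  constructor
  · obtain ⟨A, hA_compact, hA_incons, rfl⟩ := hU
    rintro ⟨hne, hne_univ⟩
    refine ⟨A, ?_, fun a ha => ⟨hA_compact a ha, fun ha_bot => hne_univ ?_⟩, hA_incons, rfl⟩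
    · obtain ⟨a, ha, -⟩ := nonempty_biUnion.1 hne
      exact ⟨a, ha⟩
    · exact eq_univ_of_univ_subset (ha_bot.Ici_eq ▸ subset_biUnion_of_mem (u := fun a => Ici a) ha)
  · rintro ⟨A, ⟨a, ha⟩, hA, -, rfl⟩
    refine ⟨⟨a, mem_biUnion ha le_rfl⟩, fun h_univ => ?_⟩
    obtain ⟨a', ha', ha'b⟩ := mem_iUnion₂.1 (h_univ ▸ mem_univ b)
    exact (hA a' ha').2 (hb.mono ha'b)

end Decomposable

section Calculus

variable {D : Type} [PartialOrder D]

lemma IsAlgebraicLDomain.isDecomposable_hat (hD : IsAlgebraicLDomain D) {φ : Fm (LAtom D)}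
    (hφ : DWF φ) : IsDecomposable (hat φ) := by
  induction hφ with
  | atom p => exact isDecomposable_Ici p.2.1
  | tt =>
      obtain ⟨b, hb⟩ := hD.exists_isBot
      exact isDecomposable_univ_of_isBot hb
  | ff => exact isDecomposable_empty
  | conj _ _ ihφ ihψ => exact hD.isDecomposable_inter ihφ ihψ
  | disj _ hdisj ih =>
      exact IsDecomposable.iUnion ih fun i j hij => disjoint_iff_inter_eq_empty.2 (hdisj i j hij)

@[simp]
lemma dSeq_singleton {φ ψ : Fm (LAtom D)} : DSeq {φ} ψ ↔ hat φ ⊆ hat ψ := by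
  simp [DSeq]

lemma taut_iff {φ : Fm (LAtom D)} (hφ : DWF φ) : Taut DWF DSeq φ ↔ hat φ = univ := by
  simp [Taut, hφ, hat, univ_subset_iff]

lemma contra_iff {φ : Fm (LAtom D)} (hφ : DWF φ) : Contra DWF DSeq φ ↔ hat φ = ∅ := by
  simp [Contra, hφ, hat, subset_empty_iff]

lemma satisfiable_iff {φ : Fm (LAtom D)} (hφ : DWF φ) :
    Satisfiable DWF DSeq φ ↔ (hat φ).Nonempty ∧ hat φ ≠ univ := by
  rw [Satisfiable, taut_iff hφ, contra_iff hφ, nonempty_iff_ne_empty]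
  tauto

lemma hat_bigConj (x : LAtom D) (l : List (LAtom D)) :
    hat (bigConj x l) = {b | ∀ y ∈ x :: l, y.val ≤ b} := by
  suffices ∀ φ, hat (l.foldl (fun φ y => Fm.conj φ (Fm.atom y)) φ) =
      hat φ ∩ {b | ∀ y ∈ l, y.val ≤ b} by
    ext; simp [bigConj, this, hat]
  induction l with
  | nil => simp
  | cons y l ih => intro φ; ext; simp [ih, hat, and_assoc]

lemma dwf_bigConj (x : LAtom D) (l : List (LAtom D)) : DWF (bigConj x l) :=
  List.foldlRecOn l _ (DWF.atom x) fun _ hφ y _ => DWF.conj hφ (DWF.atom y)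

lemma conjShape_bigConj {P : Type} (x : P) (l : List P) : ConjShape (bigConj x l) :=
  List.foldlRecOn l _ (ConjShape.atom x) fun _ hφ y _ => ConjShape.conj hφ (ConjShape.atom y)

end Calculus

/-- In the calculus associated with an algebraic L-domain `D`:
(1) `φ` is a tautology iff `φ̂ = D`; (2) `φ` is a contradiction iff `φ̂ = ∅`;
(3) `φ` is satisfiable iff `φ̂ = ↑A` for a nonempty pairwise inconsistent
`A ⊆ K*(D)`; (4) `φ, ψ` are logically equivalent iff `φ̂ = ψ̂`;
(5) `↑x₁ ∧ … ∧ ↑xₙ` is a conjunction iff `{x₁,…,xₙ}` has an upper bound. -/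
theorem stmt11 (D : Type) [PartialOrder D] (hD : IsAlgebraicLDomain D) :
    (∀ φ : Fm (LAtom D), DWF φ →
      (Taut DWF DSeq φ ↔ hat φ = (Set.univ : Set D))) ∧
    (∀ φ : Fm (LAtom D), DWF φ →
      (Contra DWF DSeq φ ↔ hat φ = (∅ : Set D))) ∧
    (∀ φ : Fm (LAtom D), DWF φ →
      (Satisfiable DWF DSeq φ ↔ ∃ A : Set D, A.Nonempty ∧
        (∀ a ∈ A, IsCompactElt a ∧ ¬ IsBot a) ∧
        (∀ a ∈ A, ∀ b ∈ A, a ≠ b → Set.Ici a ∩ Set.Ici b = ∅) ∧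
        hat φ = ⋃ a ∈ A, Set.Ici a)) ∧
    (∀ φ ψ : Fm (LAtom D), DWF φ → DWF ψ →
      ((DSeq {φ} ψ ∧ DSeq {ψ} φ) ↔ hat φ = hat ψ)) ∧
    (∀ (x : LAtom D) (l : List (LAtom D)),
      (IsConjForm DWF DSeq (bigConj x l) ↔
        ∃ b : D, ∀ y ∈ x :: l, (y : LAtom D).val ≤ b)) := by
  obtain ⟨bot, hbot⟩ := hD.exists_isBot
  refine ⟨fun φ => taut_iff, fun φ => contra_iff, fun φ hφ => ?_, fun φ ψ _ _ => ?_,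
    fun x l => ?_⟩
  · exact (satisfiable_iff hφ).trans ((hD.isDecomposable_hat hφ).nonempty_and_ne_univ_iff hbot)
  · simp only [dSeq_singleton, subset_antisymm_iff]
  · have hbot_notMem : bot ∉ hat (bigConj x l) := fun h =>
      x.2.2 (hbot.mono ((hat_bigConj x l ▸ h) x List.mem_cons_self))
    rw [IsConjForm, satisfiable_iff (dwf_bigConj x l),
      and_iff_left (ne_of_mem_of_not_mem' (mem_univ bot) hbot_notMem).symm, hat_bigConj]
    exact and_iff_right (conjShape_bigConj x l)
end
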